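/- arXiv:1511.04039 — 3 statements merged into one kernel-verified Lean document; each statement's English description precedes it below -/
import Mathlib

section
/- For any delta operator 𝔡 and grid Z = (z_i)_{i≥0} in K, there exists a unique sequence (t_n)_{n≥0} of polynomials with deg t_n = n satisfying ε_{z_i}(𝔡^i(t_n)) = n!·δ_{i,n} for all i, n ∈ ℕ (the generalized Gončarov basis). -/
open Polynomial

/-- The shift operator `E_a : K[x] → K[x]`, `f(x) ↦ f(x+a)`, as a linear endomorphism. -/
noncomputable def shiftOp (K : Type*) [Field K] (a : K) : Module.End K (Polynomial K) :=
  (aeval (X + C a) : Polynomial K →ₐ[K] Polynomial K).toLinearMap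

/-- A linear operator on `K[x]` is shift-invariant if it commutes with every shift `E_a`. -/
def IsShiftInvariant {K : Type*} [Field K] (s : Module.End K (Polynomial K)) : Prop :=
  ∀ a : K, s ∘ₗ shiftOp K a = shiftOp K a ∘ₗ s

/-- A delta operator: shift-invariant and sends `X` to a nonzero constant. -/
def IsDeltaOperator {K : Type*} [Field K] (d : Module.End K (Polynomial K)) : Prop :=
  IsShiftInvariant d ∧ ∃ c : K, c ≠ 0 ∧ d X = C c

/-- The sequence of basic polynomials of a delta operator `d`. -/
def IsBasicSequence {K : Type*} [Field K] (d : Module.End K (Polynomial K))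
    (p : ℕ → Polynomial K) : Prop :=
  p 0 = 1 ∧ (∀ n, 1 ≤ n → (p n).eval 0 = 0) ∧
    ∀ n, 1 ≤ n → d (p n) = (n : K) • p (n - 1)

/-- The generalized Gončarov basis associated with the pair `(d, z)`:
`deg t_n = n` and `ε_{z_i}(d^i t_n) = n! δ_{i,n}`. -/
def IsGoncarovBasis {K : Type*} [Field K] (d : Module.End K (Polynomial K))
    (z : ℕ → K) (t : ℕ → Polynomial K) : Prop :=
  ∀ n, (t n).natDegree = n ∧
    ∀ i, ((d ^ i) (t n)).eval (z i) = if i = n then (n.factorial : K) else 0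

/-!
Shift invariance and Taylor's formula give the expansion `d = ∑ₖ (d Xᵏ)(0) · D⁽ᵏ⁾` in Hasse
derivatives, where `(d 1)(0) = 0` and `(d X)(0) = c`. Hence `d` lowers degrees by one and
`dᵐ f = m! cᵐ fₘ` whenever `deg f ≤ m`; in particular `ε_w (d^{deg f} f) ≠ 0` for `f ≠ 0`. So
`f ↦ (ε_{zᵢ} (dⁱ f))_{i ≤ n}` is injective on polynomials of degree `≤ n`, hence bijective by
dimension count, which gives existence and uniqueness of each `tₙ`.
-/

open Finset Nat

section ShiftInvariant

variable {K : Type*} [Field K] {d : Module.End K K[X]} {c : K}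

theorem shiftOp_eq_taylor (a : K) : shiftOp K a = taylor a :=
  LinearMap.ext fun _ => rfl

theorem IsShiftInvariant.apply_taylor (hd : IsShiftInvariant d) (a : K) (f : K[X]) :
    d (taylor a f) = taylor a (d f) := by
  simpa [shiftOp_eq_taylor] using LinearMap.congr_fun (hd a) f

theorem IsShiftInvariant.map_one_eq_zero (hd : IsShiftInvariant d) (hX : d X = C c) :
    d 1 = 0 := by
  have h := hd.apply_taylor 1 X
  rw [taylor_X, hX, taylor_C, map_one, map_add, hX] at h
  simpa using h

variable [Infinite K]

theorem IsShiftInvariant.eq_sum_hasseDeriv (hd : IsShiftInvariant d) (f : K[X]) :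
    d f = ∑ k ∈ range (f.natDegree + 1), C ((d (X ^ k)).eval 0) * hasseDeriv k f := by
  refine Polynomial.funext fun a => ?_
  have hf := as_sum_range' (taylor a f) (f.natDegree + 1) (by rw [natDegree_taylor]; omega)
  have h := congr_arg (eval 0) (hd.apply_taylor a f)
  rw [hf, map_sum, taylor_eval, zero_add] at h
  simp only [← smul_X_eq_monomial, map_smul, eval_finsetSum, eval_smul, taylor_coeff,
    smul_eq_mul] at h
  simp [← h, eval_finsetSum, mul_comm]

theorem IsShiftInvariant.coeff_apply (hd : IsShiftInvariant d) (f : K[X]) (n : ℕ) :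
    (d f).coeff n = ∑ k ∈ range (f.natDegree + 1),
      (d (X ^ k)).eval 0 * ((n + k).choose k * f.coeff (n + k)) := by
  simp [hd.eq_sum_hasseDeriv f, finsetSum_coeff, hasseDeriv_coeff]

theorem IsShiftInvariant.coeff_apply_of_natDegree_le (hd : IsShiftInvariant d) (hX : d X = C c)
    {f : K[X]} {n : ℕ} (hf : f.natDegree ≤ n + 1) :
    (d f).coeff n = (n + 1) * c * f.coeff (n + 1) := by
  rw [hd.coeff_apply, sum_eq_single 1]
  · simp only [pow_one, hX, eval_C, choose_one_right, cast_add, cast_one]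
    ring
  · intro k _ hk1
    rcases Nat.lt_or_gt_of_ne hk1 with hk0 | hk2
    · simp [Nat.lt_one_iff.mp hk0, hd.map_one_eq_zero hX]
    · rw [coeff_eq_zero_of_natDegree_lt (by omega), mul_zero, mul_zero]
  · intro h1
    rw [coeff_eq_zero_of_natDegree_lt (by simp at h1; omega), mul_zero, mul_zero]

theorem IsShiftInvariant.natDegree_apply_le (hd : IsShiftInvariant d) (hX : d X = C c)
    {f : K[X]} {n : ℕ} (hf : f.natDegree ≤ n + 1) : (d f).natDegree ≤ n := by
  refine natDegree_le_iff_coeff_eq_zero.mpr fun j hj => ?_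
  rw [hd.coeff_apply]
  refine sum_eq_zero fun k _ => ?_
  rcases Nat.eq_zero_or_pos k with rfl | hk
  · simp [hd.map_one_eq_zero hX]
  · rw [coeff_eq_zero_of_natDegree_lt (by omega), mul_zero, mul_zero]

theorem IsShiftInvariant.pow_apply_of_natDegree_le (hd : IsShiftInvariant d) (hX : d X = C c)
    {f : K[X]} {m : ℕ} (hf : f.natDegree ≤ m) : (d ^ m) f = C (m ! * c ^ m * f.coeff m) := by
  induction m generalizing f with
  | zero => simpa using eq_C_of_natDegree_le_zero hf
  | succ m ih =>
    rw [pow_succ, Module.End.mul_apply, ih (hd.natDegree_apply_le hX hf),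
      hd.coeff_apply_of_natDegree_le hX hf, factorial_succ]
    congr 1
    push_cast
    ring

theorem IsShiftInvariant.pow_apply_eq_zero_of_natDegree_lt (hd : IsShiftInvariant d)
    (hX : d X = C c) {f : K[X]} {m : ℕ} (hf : f.natDegree < m) : (d ^ m) f = 0 := by
  rw [hd.pow_apply_of_natDegree_le hX hf.le, coeff_eq_zero_of_natDegree_lt hf, mul_zero, C_0]

end ShiftInvariant

namespace IsDeltaOperator

variable {K : Type*} [Field K] [CharZero K] {d : Module.End K K[X]}

theorem eval_pow_natDegree_apply_ne_zero (hd : IsDeltaOperator d) {f : K[X]} (hf : f ≠ 0)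
    (w : K) : ((d ^ f.natDegree) f).eval w ≠ 0 := by
  obtain ⟨hsi, c, hc, hX⟩ := hd
  rw [hsi.pow_apply_of_natDegree_le hX le_rfl, eval_C]
  exact mul_ne_zero (mul_ne_zero (cast_ne_zero.mpr (factorial_ne_zero _)) (pow_ne_zero _ hc))
    (leadingCoeff_ne_zero.mpr hf)

theorem eq_of_forall_eval_pow_apply_eq (hd : IsDeltaOperator d) (z : ℕ → K) {f g : K[X]}
    (h : ∀ i, ((d ^ i) f).eval (z i) = ((d ^ i) g).eval (z i)) : f = g := by
  by_contra hfg
  refine hd.eval_pow_natDegree_apply_ne_zero (sub_ne_zero.mpr hfg) (z (f - g).natDegree) ?_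
  rw [map_sub, eval_sub, h, sub_self]

theorem exists_natDegree_le_eval_pow_apply_eq (hd : IsDeltaOperator d) (z : ℕ → K) (n : ℕ)
    (v : Fin (n + 1) → K) :
    ∃ f : K[X], f.natDegree ≤ n ∧ ∀ i : Fin (n + 1), ((d ^ (i : ℕ)) f).eval (z i) = v i := by
  have natDegree_le (f : degreeLT K (n + 1)) : (f : K[X]).natDegree ≤ n := by
    have hf := mem_degreeLT.mp f.2
    exact natDegree_le_of_degree_le (Order.le_of_lt_succ (by exact_mod_cast hf))
  let Φ : degreeLT K (n + 1) →ₗ[K] Fin (n + 1) → K :=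
    LinearMap.pi (fun i => leval (z i) ∘ₗ d ^ (i : ℕ)) ∘ₗ (degreeLT K (n + 1)).subtype
  have hΦ : Function.Injective Φ := by
    refine (injective_iff_map_eq_zero Φ).mpr fun f hf => ?_
    by_contra hf0
    exact hd.eval_pow_natDegree_apply_ne_zero (by simpa using hf0) _
      (congr_fun hf ⟨_, Nat.lt_succ_of_le (natDegree_le f)⟩)
  have : FiniteDimensional K (degreeLT K (n + 1)) :=
    (degreeLTEquiv K (n + 1)).symm.finiteDimensional
  obtain ⟨f, hf⟩ := (LinearMap.injective_iff_surjective_of_finrank_eq_finrank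
    (degreeLTEquiv K (n + 1)).finrank_eq).mp hΦ v
  exact ⟨f, natDegree_le f, congr_fun hf⟩

theorem exists_natDegree_eq_eval_pow_apply_eq_ite (hd : IsDeltaOperator d) (z : ℕ → K) (n : ℕ) :
    ∃ p : K[X], p.natDegree = n ∧
      ∀ i, ((d ^ i) p).eval (z i) = if i = n then (n ! : K) else 0 := by
  obtain ⟨p, hpn, hp⟩ :=
    hd.exists_natDegree_le_eval_pow_apply_eq z n fun i => if (i : ℕ) = n then (n ! : K) else 0
  have hpi (i : ℕ) (hi : i ≤ n) := hp ⟨i, Nat.lt_succ_of_le hi⟩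
  have hp0 : p ≠ 0 := by
    rintro rfl
    simpa [(cast_ne_zero.mpr (factorial_ne_zero n)).symm] using hpi n le_rfl
  have hdeg : p.natDegree = n := by
    by_contra hne
    exact hd.eval_pow_natDegree_apply_ne_zero hp0 _ (by simpa [hne] using hpi _ hpn)
  refine ⟨p, hdeg, fun i => ?_⟩
  rcases le_or_gt i n with hi | hi
  · exact hpi i hi
  · obtain ⟨hsi, c, -, hX⟩ := hd
    rw [hsi.pow_apply_eq_zero_of_natDegree_lt hX (hdeg ▸ hi), eval_zero, if_neg hi.ne']

end IsDeltaOperator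

theorem stmt4 {K : Type*} [Field K] [CharZero K] (d : Module.End K (Polynomial K))
    (hd : IsDeltaOperator d) (z : ℕ → K) :
    ∃! t : ℕ → Polynomial K, IsGoncarovBasis d z t := by
  choose t ht using hd.exists_natDegree_eq_eval_pow_apply_eq_ite z
  refine ⟨t, ht, fun t' ht' => funext fun n => hd.eq_of_forall_eval_pow_apply_eq z fun i => ?_⟩
  rw [(ht' n).2 i, (ht n).2 i]
end

section
/- A polynomial sequence (p_n)_{n≥0} with deg p_i = i for all i is of binomial type if and only if it is the generalized Gončarov basis associated with (𝔡, O) for some delta operator 𝔡, where O is the zero grid. -/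
/-!
For the zero grid, a sequence with `p n` of degree `n` and `p n (0) = δ_{n,0}` is the Gončarov
basis of `d` exactly when `d (p n) = n • p (n - 1)`; the coordinates of any `f` in the basis
`(p n)` are then `(dᵏ f)(0) / k!`. Applied to `f = p n (x + y)`, and using that `d` commutes with
shifts, the `k`-th coordinate is `(dᵏ p n)(y) / k! = C(n, k) p (n - k) (y)`, which is the binomial
identity. Conversely, reading off the `p 0`-coordinate of the binomial identity at `y = 0` gives
`p n (0) = δ_{n,0}`, and the operator defined on the basis by `p n ↦ n • p (n - 1)` commutes with
shifts because `k C(n, k) = n C(n - 1, k - 1)`; it sends `X`, a multiple of `p 1`, to a nonzero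
constant.
-/

open Polynomial

open scoped Nat

namespace Polynomial

variable {K : Type*} [Field K] {p : ℕ → K[X]}

theorem degree_eq_of_natDegree_eq (hdeg : ∀ i, (p i).natDegree = i) (h0 : p 0 ≠ 0) (i : ℕ) :
    (p i).degree = i := by
  rcases i with _ | i
  · simpa [hdeg 0] using degree_eq_natDegree h0
  · exact degree_eq_iff_natDegree_eq_of_pos i.succ_pos |>.mpr (hdeg _)

noncomputable def basisOfNatDegree (hdeg : ∀ i, (p i).natDegree = i) (h0 : p 0 ≠ 0) :
    Module.Basis ℕ K K[X] :=
  let S : Sequence K := ⟨p, degree_eq_of_natDegree_eq hdeg h0⟩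
  S.basis fun i => (leadingCoeff_ne_zero.mpr (S.ne_zero i)).isUnit

variable (hdeg : ∀ i, (p i).natDegree = i) (h0 : p 0 ≠ 0)
include hdeg h0

@[simp]
theorem basisOfNatDegree_apply (n : ℕ) : basisOfNatDegree hdeg h0 n = p n := by
  simp [basisOfNatDegree]

theorem basisOfNatDegree_repr_self (n k : ℕ) :
    (basisOfNatDegree hdeg h0).repr (p n) k = if n = k then 1 else 0 := by
  rw [← basisOfNatDegree_apply hdeg h0 n, Module.Basis.repr_self_apply]

theorem basisOfNatDegree_repr_sum (c : ℕ → K) (n k : ℕ) :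
    (basisOfNatDegree hdeg h0).repr (∑ j ∈ Finset.range (n + 1), c j • p j) k =
      if k ≤ n then c k else 0 := by
  simp [map_sum, Finsupp.finsetSum_apply, basisOfNatDegree_repr_self hdeg h0]

end Polynomial

theorem Module.End.pow_apply_eq_descFactorial_smul {R M : Type*} [Semiring R] [AddCommMonoid M]
    [Module R M] {d : Module.End R M} {p : ℕ → M} (hd : ∀ n, d (p n) = (n : R) • p (n - 1))
    (n i : ℕ) : (d ^ i) (p n) = (n.descFactorial i : R) • p (n - i) := by
  induction i with
  | zero => simp
  | succ i ih =>
    rw [pow_succ', Module.End.mul_apply, ih, map_smul, hd, smul_smul, Nat.descFactorial_succ,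
      Nat.cast_mul, Nat.sub_sub, Nat.cast_comm]

section Shift

variable {K : Type*} [Field K]

theorem shiftOp_apply (a : K) (f : K[X]) : shiftOp K a f = f.comp (X + C a) := by
  simp [shiftOp, aeval_def, comp, Polynomial.algebraMap_eq]

@[simp]
theorem eval_shiftOp (a x : K) (f : K[X]) : (shiftOp K a f).eval x = f.eval (x + a) := by
  simp [shiftOp_apply]

theorem IsShiftInvariant.pow_apply_shiftOp {d : Module.End K K[X]} (hd : IsShiftInvariant d)
    (i : ℕ) (a : K) (f : K[X]) : (d ^ i) (shiftOp K a f) = shiftOp K a ((d ^ i) f) := by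
  have hcomm : Commute d (shiftOp K a) := hd a
  exact LinearMap.congr_fun (hcomm.pow_left i) f

end Shift

def IsBinomialType {K : Type*} [Field K] (p : ℕ → K[X]) : Prop :=
  ∀ (n : ℕ) (y : K), (p n).comp (X + C y) =
    ∑ k ∈ Finset.range (n + 1), (n.choose k : K) • ((p (n - k)).eval y • p k)

theorem exists_apply_X_eq_C {K : Type*} [Field K] {d : Module.End K K[X]} {q : K[X]}
    (hq : q.natDegree = 1) (hq0 : q.eval 0 = 0) (hd : d q = 1) : ∃ c, c ≠ 0 ∧ d X = C c := by
  set a := q.coeff 1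
  have ha : a ≠ 0 := by
    have hne : q ≠ 0 := by rintro rfl; simp at hq
    simpa [leadingCoeff, hq] using leadingCoeff_ne_zero.mpr hne
  have hX : X = a⁻¹ • q := by
    rw [eq_X_add_C_of_natDegree_le_one hq.le, coeff_zero_eq_eval_zero, hq0, C_0, add_zero,
      smul_eq_C_mul, ← mul_assoc, ← C_mul, inv_mul_cancel₀ ha, C_1, one_mul]
  exact ⟨a⁻¹, inv_ne_zero ha, by rw [hX, map_smul, hd, smul_eq_C_mul, mul_one]⟩

theorem isGoncarovBasis_of_apply_eq_smul {K : Type*} [Field K] {d : Module.End K K[X]}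
    {p : ℕ → K[X]} (hdeg : ∀ i, (p i).natDegree = i)
    (heval : ∀ n, (p n).eval 0 = if n = 0 then 1 else 0)
    (hd : ∀ n, d (p n) = (n : K) • p (n - 1)) : IsGoncarovBasis d (fun _ => 0) p := by
  refine fun n => ⟨hdeg n, fun i => ?_⟩
  rw [Module.End.pow_apply_eq_descFactorial_smul hd, eval_smul, heval, smul_eq_mul]
  rcases lt_trichotomy i n with h | rfl | h
  · simp [h.ne, Nat.sub_ne_zero_of_lt h]
  · simp [Nat.descFactorial_self]
  · simp [h.ne', Nat.descFactorial_eq_zero_iff_lt.mpr h]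

namespace IsBinomialType

variable {K : Type*} [Field K] {p : ℕ → K[X]} (hdeg : ∀ i, (p i).natDegree = i)
  (hbin : IsBinomialType p)
include hbin

theorem shiftOp_apply_eq (n : ℕ) (y : K) :
    shiftOp K y (p n) =
      ∑ k ∈ Finset.range (n + 1), ((n.choose k : K) * (p (n - k)).eval y) • p k := by
  simp_rw [shiftOp_apply, hbin n y, smul_smul]

include hdeg

theorem apply_zero_ne_zero : p 0 ≠ 0 := by
  intro h0
  have h1 := hbin 1 0
  simp [Finset.sum_range_succ, h0] at h1
  simpa [h1] using hdeg 1

theorem eval_zero (n : ℕ) : (p n).eval 0 = if n = 0 then 1 else 0 := by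
  have h0 := hbin.apply_zero_ne_zero hdeg
  have h := congrArg (fun f => (basisOfNatDegree hdeg h0).repr f 0) (hbin.shiftOp_apply_eq n 0)
  simpa [basisOfNatDegree_repr_sum, basisOfNatDegree_repr_self, shiftOp_apply, eq_comm] using h.symm

theorem apply_zero : p 0 = 1 := by
  rw [eq_C_of_natDegree_eq_zero (hdeg 0), coeff_zero_eq_eval_zero, hbin.eval_zero hdeg, if_pos rfl,
    C_1]

theorem isShiftInvariant {d : Module.End K K[X]} (hd : ∀ n, d (p n) = (n : K) • p (n - 1)) :
    IsShiftInvariant d := by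
  intro a
  refine (basisOfNatDegree hdeg (hbin.apply_zero_ne_zero hdeg)).ext fun n => ?_
  simp only [basisOfNatDegree_apply, LinearMap.comp_apply]
  rcases n with _ | m
  · simp [hbin.shiftOp_apply_eq, hd]
  · rw [hbin.shiftOp_apply_eq, hd, map_smul, Nat.add_sub_cancel, hbin.shiftOp_apply_eq, map_sum,
      Finset.sum_range_succ', Finset.smul_sum]
    simp only [map_smul, hd, smul_smul, Nat.cast_zero, zero_smul, smul_zero, add_zero,
      Nat.add_sub_cancel, Nat.add_sub_add_right, Nat.cast_add, Nat.cast_one]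
    refine Finset.sum_congr rfl fun k _ => ?_
    have hchoose : ((m : K) + 1) * m.choose k = (m + 1).choose (k + 1) * ((k : K) + 1) := by
      exact_mod_cast congrArg (Nat.cast (R := K)) (Nat.add_one_mul_choose_eq m k)
    congr 1
    linear_combination -(p (m - k)).eval a * hchoose

theorem exists_isDeltaOperator :
    ∃ d : Module.End K K[X], IsDeltaOperator d ∧ ∀ n, d (p n) = (n : K) • p (n - 1) := by
  let b := basisOfNatDegree hdeg (hbin.apply_zero_ne_zero hdeg)
  let d := b.constr K fun n => (n : K) • p (n - 1)
  have hd : ∀ n, d (p n) = (n : K) • p (n - 1) := fun n => by simpa [b] using b.constr_basis K _ n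
  refine ⟨d, ⟨hbin.isShiftInvariant hdeg hd, exists_apply_X_eq_C (hdeg 1) ?_ ?_⟩, hd⟩
  · simpa using hbin.eval_zero hdeg 1
  · simpa [hbin.apply_zero hdeg] using hd 1

end IsBinomialType

namespace IsGoncarovBasis

variable {K : Type*} [Field K] {d : Module.End K K[X]} {p : ℕ → K[X]}
  (hgon : IsGoncarovBasis d (fun _ => 0) p)
include hgon

theorem apply_zero : p 0 = 1 := by
  have h := (hgon 0).2 0
  simp only [pow_zero, Module.End.one_apply, if_true, Nat.factorial_zero, Nat.cast_one] at h
  rw [eq_C_of_natDegree_eq_zero (hgon 0).1, coeff_zero_eq_eval_zero, h, C_1]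

noncomputable abbrev basis : Module.Basis ℕ K K[X] :=
  basisOfNatDegree (fun n => (hgon n).1) (by rw [hgon.apply_zero]; exact one_ne_zero)

theorem eval_pow_apply (f : K[X]) (i : ℕ) : ((d ^ i) f).eval 0 = i ! * hgon.basis.repr f i := by
  have key : leval (0 : K) ∘ₗ d ^ i = (i ! : K) • hgon.basis.coord i := by
    refine hgon.basis.ext fun n => ?_
    by_cases h : i = n
    · subst h; simp [basisOfNatDegree_repr_self, (hgon i).2 i]
    · simp [basisOfNatDegree_repr_self, (hgon n).2 i, h, Ne.symm h]
  simpa using LinearMap.congr_fun key f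

variable [CharZero K]

theorem apply_eq_smul (n : ℕ) : d (p n) = (n : K) • p (n - 1) := by
  refine hgon.basis.repr.injective <| Finsupp.ext fun k => ?_
  refine mul_left_cancel₀ (Nat.cast_ne_zero.mpr k.factorial_ne_zero : (k ! : K) ≠ 0) ?_
  rw [← hgon.eval_pow_apply, ← Module.End.mul_apply, ← pow_succ, (hgon n).2, map_smul,
    Finsupp.smul_apply, basisOfNatDegree_repr_self]
  rcases n with _ | m
  · simp
  · by_cases h : m = k
    · subst h
      simp [Nat.factorial_succ, mul_comm]
    · simp [h, Ne.symm h]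

theorem isBinomialType (hshift : IsShiftInvariant d) : IsBinomialType p := by
  intro n y
  refine hgon.basis.repr.injective <| Finsupp.ext fun k => ?_
  refine mul_left_cancel₀ (Nat.cast_ne_zero.mpr k.factorial_ne_zero : (k ! : K) ≠ 0) ?_
  rw [← shiftOp_apply, ← hgon.eval_pow_apply, hshift.pow_apply_shiftOp, eval_shiftOp,
    Module.End.pow_apply_eq_descFactorial_smul hgon.apply_eq_smul, eval_smul, zero_add]
  simp_rw [smul_smul]
  rw [basisOfNatDegree_repr_sum]
  split_ifs with hk
  · rw [Nat.descFactorial_eq_factorial_mul_choose, smul_eq_mul]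
    push_cast
    ring
  · simp [Nat.descFactorial_eq_zero_iff_lt.mpr (not_le.mp hk)]

end IsGoncarovBasis

theorem stmt8 {K : Type*} [Field K] [CharZero K] (p : ℕ → Polynomial K)
    (hdeg : ∀ i, (p i).natDegree = i) :
    (∀ (n : ℕ) (y : K), (p n).comp (X + C y) =
        ∑ k ∈ Finset.range (n + 1), (n.choose k : K) • ((p (n - k)).eval y • p k)) ↔
    ∃ d : Module.End K (Polynomial K),
      IsDeltaOperator d ∧ IsGoncarovBasis d (fun _ => (0 : K)) p := by
  constructor
  · intro (hbin : IsBinomialType p)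
    obtain ⟨d, hdelta, hd⟩ := IsBinomialType.exists_isDeltaOperator hdeg hbin
    exact ⟨d, hdelta, isGoncarovBasis_of_apply_eq_smul hdeg (hbin.eval_zero hdeg) hd⟩
  · rintro ⟨d, ⟨hshift, -⟩, hgon⟩
    exact hgon.isBinomialType hshift
end

section
/- Perturbation formula: let Z and Z′ be grids with z_k ≠ z′_k for one index k and z_i = z′_i for all i ≠ k. Then t_n(x; 𝔡, Z′) = t_n(x; 𝔡, Z) for n ≤ k, and for n > k, t_n(x; 𝔡, Z′) = t_n(x; 𝔡, Z) − C(n,k)·t_{n−k}(z′_k; 𝔡, Z^{(k)})·t_k(x; 𝔡, Z), where Z^{(k)} = (z_{i+k})_{i≥0}. -/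
/-!
A delta operator lowers degrees by exactly one, so a polynomial `r` with `(dⁱ r)(wᵢ) = 0` for all
`i` is zero: `t_n` is determined by its interpolation data. For `n ≤ k` the data of `t_n` at `Z`
and `Z′` agree, because `dᵏ t_n` is constant. For `n > k`, `dᵏ t_n` satisfies the conditions of
the shifted grid `Z^{(k)}` up to the factor `n!/(n-k)!`, so `dᵏ t_n = n^{(k)} t_{n-k}(·; Z^{(k)})`,
and subtracting the matching multiple of `t_k` repairs the one condition at `z′_k`.
-/

open Polynomial

open Finset

theorem Polynomial.linearMap_apply_eq_sum {K M : Type*} [Field K] [AddCommGroup M] [Module K M]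
    (f : K[X] →ₗ[K] M) (p : K[X]) :
    f p = ∑ i ∈ range (p.natDegree + 1), p.coeff i • f (X ^ i) := by
  conv_lhs => rw [p.as_sum_range_C_mul_X_pow]
  simp only [← smul_eq_C_mul, map_sum, map_smul]

namespace IsShiftInvariant

variable {K : Type*} [Field K] {d : Module.End K K[X]}

theorem apply_comp_X_add_C (hd : IsShiftInvariant d) (p : K[X]) (a : K) :
    d (p.comp (X + C a)) = (d p).comp (X + C a) :=
  LinearMap.congr_fun (hd a) p

theorem apply_C (hd : IsShiftInvariant d) {c : K} (hc : d X = C c) (a : K) : d (C a) = 0 := by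
  have h := hd.apply_comp_X_add_C X a
  rw [X_comp, hc, C_comp, map_add, hc] at h
  simpa using h

theorem apply_one (hd : IsShiftInvariant d) {c : K} (hc : d X = C c) : d 1 = 0 := by
  simpa using hd.apply_C hc 1

/-- Shift invariance gives `(d Xⁿ)(a) = (d (X + a)ⁿ)(0)`; expand `(X + a)ⁿ` binomially. -/
theorem apply_X_pow [Infinite K] (hd : IsShiftInvariant d) (n : ℕ) :
    d (X ^ n) = ∑ j ∈ range (n + 1),
      C ((n.choose j : K) * (d (X ^ j)).eval 0) * X ^ (n - j) := by
  refine Polynomial.funext fun a => ?_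
  have hexp : (X + C a) ^ n = ∑ j ∈ range (n + 1), ((n.choose j : K) * a ^ (n - j)) • X ^ j := by
    rw [add_pow]
    refine sum_congr rfl fun j _ => ?_
    simp only [smul_eq_C_mul, C_mul, C_pow, C_eq_natCast]
    ring
  calc (d (X ^ n)).eval a
      = (d ((X ^ n).comp (X + C a))).eval 0 := by
        rw [hd.apply_comp_X_add_C, eval_comp]; simp
    _ = ∑ j ∈ range (n + 1), (n.choose j : K) * a ^ (n - j) * (d (X ^ j)).eval 0 := by
        simp only [X_pow_comp, hexp, map_sum, map_smul, eval_finsetSum, eval_smul, smul_eq_mul]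
    _ = _ := by
        simp only [eval_finsetSum, eval_mul, eval_C, eval_pow, eval_X]
        exact sum_congr rfl fun j _ => by ring

variable [Infinite K] {c : K}

theorem natDegree_apply_X_pow_le (hd : IsShiftInvariant d) (hc : d X = C c) (n : ℕ) :
    (d (X ^ n)).natDegree ≤ n - 1 := by
  rw [hd.apply_X_pow]
  refine natDegree_sum_le_of_forall_le _ _ fun j _ => ?_
  rcases j with _ | j
  · simp [hd.apply_one hc]
  · exact (natDegree_C_mul_X_pow_le _ _).trans (by omega)

theorem coeff_apply_X_pow (hd : IsShiftInvariant d) (hc : d X = C c) (n : ℕ) :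
    (d (X ^ n)).coeff (n - 1) = n * c := by
  rw [hd.apply_X_pow, finsetSum_coeff, sum_eq_single 1]
  · rw [coeff_C_mul_X_pow]
    rcases n with _ | n <;> simp [hc]
  · intro j hj hj1
    rcases j with _ | j
    · simp [hd.apply_one hc]
    · rw [coeff_C_mul_X_pow, if_neg (by simp at hj; omega)]
  · intro h
    simp [show n = 0 by simpa using h]

theorem natDegree_apply_le_s16 (hd : IsShiftInvariant d) (hc : d X = C c) (p : K[X]) :
    (d p).natDegree ≤ p.natDegree - 1 := by
  rw [linearMap_apply_eq_sum d]
  refine natDegree_sum_le_of_forall_le _ _ fun i hi => ?_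
  exact (natDegree_smul_le _ _).trans
    ((hd.natDegree_apply_X_pow_le hc i).trans (by simp at hi; omega))

theorem coeff_apply_s16 (hd : IsShiftInvariant d) (hc : d X = C c) (p : K[X]) :
    (d p).coeff (p.natDegree - 1) = p.leadingCoeff * (p.natDegree * c) := by
  rw [linearMap_apply_eq_sum d, finsetSum_coeff, sum_eq_single p.natDegree]
  · rw [coeff_smul, hd.coeff_apply_X_pow hc, smul_eq_mul, leadingCoeff]
  · intro i hi hin
    rw [coeff_smul]
    rcases i with _ | i
    · simp [hd.apply_one hc]
    · rw [coeff_eq_zero_of_natDegree_lt (p := d (X ^ (i + 1))), smul_zero]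
      exact (hd.natDegree_apply_X_pow_le hc _).trans_lt (by simp at hi; omega)
  · simp

end IsShiftInvariant

namespace IsDeltaOperator

variable {K : Type*} [Field K] [CharZero K] {d : Module.End K K[X]}

theorem coeff_apply_ne_zero (hd : IsDeltaOperator d) {p : K[X]} (hp : 0 < p.natDegree) :
    (d p).coeff (p.natDegree - 1) ≠ 0 := by
  obtain ⟨c, hc0, hc⟩ := hd.2
  rw [hd.1.coeff_apply_s16 hc]
  have hp0 : p ≠ 0 := by rintro rfl; simp at hp
  exact mul_ne_zero (leadingCoeff_ne_zero.mpr hp0) (mul_ne_zero (by simp; omega) hc0)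

theorem apply_ne_zero (hd : IsDeltaOperator d) {p : K[X]} (hp : 0 < p.natDegree) : d p ≠ 0 :=
  fun h => hd.coeff_apply_ne_zero hp (by rw [h, coeff_zero])

theorem natDegree_apply (hd : IsDeltaOperator d) (p : K[X]) :
    (d p).natDegree = p.natDegree - 1 := by
  obtain ⟨c, -, hc⟩ := hd.2
  rcases Nat.eq_zero_or_pos p.natDegree with hp | hp
  · rw [eq_C_of_natDegree_eq_zero hp, hd.1.apply_C hc, natDegree_zero, natDegree_C]
  · exact (hd.1.natDegree_apply_le_s16 hc p).antisymm
      (le_natDegree_of_ne_zero (hd.coeff_apply_ne_zero hp))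

theorem natDegree_pow_apply (hd : IsDeltaOperator d) (p : K[X]) (i : ℕ) :
    ((d ^ i) p).natDegree = p.natDegree - i := by
  induction i with
  | zero => simp
  | succ i ih => rw [pow_succ', Module.End.mul_apply, hd.natDegree_apply, ih, Nat.sub_sub]

theorem pow_apply_ne_zero (hd : IsDeltaOperator d) {p : K[X]} (hp : p ≠ 0) {i : ℕ}
    (hi : i ≤ p.natDegree) : (d ^ i) p ≠ 0 := by
  induction i with
  | zero => simpa using hp
  | succ i _ =>
    rw [pow_succ', Module.End.mul_apply]
    exact hd.apply_ne_zero (by rw [hd.natDegree_pow_apply]; omega)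

/-- `d^(deg r) r` is a nonzero constant, so it cannot vanish at `z (deg r)`. -/
theorem eq_zero_of_forall_eval_pow_apply (hd : IsDeltaOperator d) (z : ℕ → K) {r : K[X]}
    (h : ∀ i, ((d ^ i) r).eval (z i) = 0) : r = 0 := by
  by_contra hr
  set m := r.natDegree
  have hconst : (d ^ m) r = C (((d ^ m) r).coeff 0) :=
    eq_C_of_natDegree_eq_zero (by rw [hd.natDegree_pow_apply, Nat.sub_self])
  have hval := h m
  rw [hconst, eval_C] at hval
  exact hd.pow_apply_ne_zero hr le_rfl (by rw [hconst, hval, C_0])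

end IsDeltaOperator

namespace IsGoncarovBasis

variable {K : Type*} [Field K] [CharZero K] {d : Module.End K K[X]} {z : ℕ → K}
  {t : ℕ → K[X]}

theorem eq_of_forall_eval_pow_apply (hd : IsDeltaOperator d) (ht : IsGoncarovBasis d z t)
    {n : ℕ} {p : K[X]}
    (h : ∀ i, ((d ^ i) p).eval (z i) = if i = n then (n.factorial : K) else 0) : p = t n := by
  refine sub_eq_zero.mp (hd.eq_zero_of_forall_eval_pow_apply z fun i => ?_)
  rw [map_sub, eval_sub, h, (ht n).2, sub_self]

/-- For `n ≤ i` the polynomial `d^i (t n)` is constant, so its value at `z i` is its value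
everywhere. -/
theorem eval_pow_apply_of_le (hd : IsDeltaOperator d) (ht : IsGoncarovBasis d z t) {n i : ℕ}
    (hni : n ≤ i) (a : K) :
    ((d ^ i) (t n)).eval a = if i = n then (n.factorial : K) else 0 := by
  have hconst := eq_C_of_natDegree_eq_zero
    (by rw [hd.natDegree_pow_apply, (ht n).1]; omega : ((d ^ i) (t n)).natDegree = 0)
  rw [← (ht n).2 i, hconst, eval_C, eval_C]

theorem pow_apply_eq_descFactorial_smul (hd : IsDeltaOperator d) (ht : IsGoncarovBasis d z t)
    {k : ℕ} {s : ℕ → K[X]} (hs : IsGoncarovBasis d (fun i => z (i + k)) s) {n : ℕ}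
    (hkn : k ≤ n) : (d ^ k) (t n) = (n.descFactorial k : K) • s (n - k) := by
  refine sub_eq_zero.mp (hd.eq_zero_of_forall_eval_pow_apply (fun i => z (i + k)) fun i => ?_)
  rw [map_sub, map_smul, eval_sub, eval_smul, ← Module.End.mul_apply, ← pow_add, (ht n).2,
    (hs (n - k)).2, smul_eq_mul, ← Nat.factorial_mul_descFactorial hkn]
  by_cases hi : i = n - k
  · rw [if_pos (by omega), if_pos hi]
    push_cast
    ring
  · rw [if_neg (by omega), if_neg hi, mul_zero, sub_zero]

end IsGoncarovBasis

theorem stmt16_general {K : Type*} [Field K] [CharZero K] (d : Module.End K (Polynomial K))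
    (hd : IsDeltaOperator d) (z z' : ℕ → K) (k : ℕ)
    (hz : ∀ i, i ≠ k → z i = z' i)
    (t t' tk : ℕ → Polynomial K)
    (ht : IsGoncarovBasis d z t) (ht' : IsGoncarovBasis d z' t')
    (htk : IsGoncarovBasis d (fun i => z (i + k)) tk) :
    (∀ n, n ≤ k → t' n = t n) ∧
    (∀ n, k < n → t' n = t n -
        (n.choose k : K) • ((tk (n - k)).eval (z' k)) • t k) := by
  refine ⟨fun n hn => (ht'.eq_of_forall_eval_pow_apply hd fun i => ?_).symm,
    fun n hn => (ht'.eq_of_forall_eval_pow_apply hd fun i => ?_).symm⟩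
  · rcases eq_or_ne i k with rfl | hik
    · exact ht.eval_pow_apply_of_le hd hn (z' i)
    · rw [← hz i hik, (ht n).2]
  · rw [map_sub, map_smul, map_smul, eval_sub, eval_smul, eval_smul, smul_eq_mul, smul_eq_mul]
    rcases eq_or_ne i k with rfl | hik
    · rw [ht.pow_apply_eq_descFactorial_smul hd htk hn.le, ht.eval_pow_apply_of_le hd le_rfl,
        if_pos rfl, if_neg hn.ne, eval_smul, smul_eq_mul, Nat.descFactorial_eq_factorial_mul_choose]
      push_cast
      ring
    · rw [← hz i hik, (ht n).2, (ht k).2, if_neg hik, mul_zero, mul_zero, sub_zero]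

theorem stmt16 {K : Type*} [Field K] [CharZero K] (d : Module.End K (Polynomial K))
    (hd : IsDeltaOperator d) (z z' : ℕ → K) (k : ℕ)
    (hzk : z k ≠ z' k) (hz : ∀ i, i ≠ k → z i = z' i)
    (t t' tk : ℕ → Polynomial K)
    (ht : IsGoncarovBasis d z t) (ht' : IsGoncarovBasis d z' t')
    (htk : IsGoncarovBasis d (fun i => z (i + k)) tk) :
    (∀ n, n ≤ k → t' n = t n) ∧
    (∀ n, k < n → t' n = t n -
        (n.choose k : K) • ((tk (n - k)).eval (z' k)) • t k) :=
  stmt16_general d hd z z' k hz t t' tk ht ht' htk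
end
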